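/- As a special case of the colored sub-tree lemma: if a complete binary tree of height K·(d−1)+1 has all vertices colored by K colors, then there is a color c and a sub-tree of height d whose internal vertices are all colored c. In particular, any K-coloring of a tree of height h contains a monochromatic sub-tree of height at least ⌈h/K⌉. -/

import Mathlib

/-- A complete binary tree of height `h` (the number of vertices on any root-to-leaf
path) with every vertex colored by an element of `α`. -/
inductive CBT (α : Type*) : ℕ → Type _
  | leaf : CBT α 0
  | node {h : ℕ} : α → CBT α h → CBT α h → CBT α (h + 1)

/-- The set of colors appearing at the vertices of a tree. -/
def CBT.colors {α : Type*} : ∀ {h : ℕ}, CBT α h → Set α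
  | _, .leaf => ∅
  | _, .node a l r => insert a (l.colors ∪ r.colors)

/-- `SubMono c t d` : `t` contains a sub-tree of height `d` all of whose internal
vertices are colored `c`.  Sub-trees are defined recursively: any node is a sub-tree of
height `1` (no color constraint, since it has no internal vertex); a sub-tree of height
`d + 1` joins, at a node colored `c`, a height-`d` sub-tree of the left child's tree and
a height-`d` sub-tree of the right child's tree. -/
inductive SubMono {α : Type*} (c : α) : ∀ {h : ℕ}, CBT α h → ℕ → Prop
  | zero {h : ℕ} (t : CBT α h) : SubMono c t 0
  | one {h : ℕ} (a : α) (l r : CBT α h) : SubMono c (.node a l r) 1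
  | descend_left {h : ℕ} (a : α) (l r : CBT α h) {d : ℕ} :
      SubMono c l d → SubMono c (.node a l r) d
  | descend_right {h : ℕ} (a : α) (l r : CBT α h) {d : ℕ} :
      SubMono c r d → SubMono c (.node a l r) d
  | join {h : ℕ} (l r : CBT α h) {d : ℕ} :
      SubMono c l d → SubMono c r d → SubMono c (.node c l r) (d + 1)

/-!
Give each color `i` a budget `m i`. If the budgets sum to less than the height, some color `i`
has a sub-tree of height `m i + 1` with all internal vertices colored `i`: at the root, colored
`i₀`, either `m i₀ = 0` and the root alone suffices, or we lower `i₀`'s budget by one and recurse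
into both children; a child winning with a color other than `i₀` wins for the whole tree, and if
both children win with `i₀` they join at the root. Equal budgets `d - 1` give the theorem.
-/

namespace CBT

variable {α : Type*}

theorem colors_left_subset {h : ℕ} (a : α) (l r : CBT α h) :
    l.colors ⊆ (node a l r).colors :=
  fun _ hx => Set.mem_insert_of_mem _ (Or.inl hx)

theorem colors_right_subset {h : ℕ} (a : α) (l r : CBT α h) :
    r.colors ⊆ (node a l r).colors :=
  fun _ hx => Set.mem_insert_of_mem _ (Or.inr hx)

theorem root_mem_colors {h : ℕ} (a : α) (l r : CBT α h) : a ∈ (node a l r).colors :=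
  Set.mem_insert _ _

end CBT

theorem Fintype.sum_update_sub_one_add_one {ι : Type*} [Fintype ι] [DecidableEq ι] (m : ι → ℕ)
    {i : ι} (hi : 0 < m i) : ∑ j, Function.update m i (m i - 1) j + 1 = ∑ j, m j := by
  rw [Finset.sum_update_of_mem (Finset.mem_univ i), ← Finset.add_sum_erase _ _ (Finset.mem_univ i),
    Finset.sdiff_singleton_eq_erase]
  omega

section ColoredSubtree

variable {α ι : Type*} [Fintype ι] (c : ι → α)

theorem exists_subMono_of_sum_lt {h : ℕ} (t : CBT α h) (ht : t.colors ⊆ Set.range c)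
    (m : ι → ℕ) (hm : ∑ i, m i < h) : ∃ i, SubMono (c i) t (m i + 1) := by
  classical
  induction t generalizing m with
  | leaf => omega
  | @node n a l r ihl ihr =>
    obtain ⟨i₀, rfl⟩ := ht (CBT.root_mem_colors a l r)
    rcases Nat.eq_zero_or_pos (m i₀) with hm₀ | hm₀
    · exact ⟨i₀, hm₀ ▸ SubMono.one _ l r⟩
    have hm' : ∑ i, Function.update m i₀ (m i₀ - 1) i < n := by
      have := Fintype.sum_update_sub_one_add_one m hm₀
      omega
    obtain ⟨il, hil⟩ := ihl ((CBT.colors_left_subset _ l r).trans ht) _ hm'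
    obtain ⟨ir, hir⟩ := ihr ((CBT.colors_right_subset _ l r).trans ht) _ hm'
    by_cases hl : il = i₀
    · by_cases hr : ir = i₀
      · subst il ir
        refine ⟨i₀, ?_⟩
        rw [Function.update_self, Nat.sub_add_cancel hm₀] at hil hir
        exact SubMono.join l r hil hir
      · refine ⟨ir, ?_⟩
        rw [Function.update_of_ne hr] at hir
        exact SubMono.descend_right _ l r hir
    · refine ⟨il, ?_⟩
      rw [Function.update_of_ne hl] at hil
      exact SubMono.descend_left _ l r hil

theorem exists_subMono_of_card_mul_lt {h d : ℕ} (t : CBT α h) (ht : t.colors ⊆ Set.range c)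
    (hd : 0 < d) (hh : Fintype.card ι * (d - 1) < h) : ∃ i, SubMono (c i) t d := by
  simpa [Nat.sub_add_cancel hd] using
    exists_subMono_of_sum_lt c t ht (fun _ => d - 1) (by simpa using hh)

end ColoredSubtree

theorem Nat.mul_pred_ceilDiv_lt {h K : ℕ} (hd : 0 < (h + K - 1) / K) :
    K * ((h + K - 1) / K - 1) < h := by
  have hK : 0 < K := Nat.pos_of_ne_zero fun hK => by simp [hK] at hd
  have := Nat.div_mul_le_self (h + K - 1) K
  generalize (h + K - 1) / K = d at *
  have := Nat.le_mul_of_pos_left K hd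
  rw [Nat.mul_sub_one, mul_comm]
  omega

/-- Special case of the colored sub-tree lemma: a `K`-colored complete binary tree of
height `K (d - 1) + 1` contains a monochromatic sub-tree of height `d`; in particular
any `K`-coloring of a tree of height `h` contains a monochromatic sub-tree of height at
least `⌈h / K⌉`. -/
theorem monochromatic_subtree {α : Type*} {K : ℕ} (hK : 0 < K) (c : Fin K → α) :
    (∀ d : ℕ, 0 < d → ∀ t : CBT α (K * (d - 1) + 1), t.colors ⊆ Set.range c →
      ∃ i, SubMono (c i) t d) ∧
    (∀ (h : ℕ) (t : CBT α h), t.colors ⊆ Set.range c →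
      ∃ i, SubMono (c i) t ((h + K - 1) / K)) := by
  constructor
  · intro d hd t ht
    exact exists_subMono_of_card_mul_lt c t ht hd (by simp)
  · intro h t ht
    rcases Nat.eq_zero_or_pos ((h + K - 1) / K) with hd | hd
    · exact ⟨⟨0, hK⟩, by rw [hd]; exact SubMono.zero t⟩
    · exact exists_subMono_of_card_mul_lt c t ht hd (by simpa using Nat.mul_pred_ceilDiv_lt hd)
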